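/- arXiv:1810.09001 — 2 statements merged into one kernel-verified Lean document; each statement's English description precedes it below -/
import Mathlib

section
/- Let z₁, z₂ ∈ ℂ with z₁−z₂ ∉ ℤ+τℤ, and define f(x) = ρ(x−z₁,τ)ρ(x−z₂,τ) + ρ(z₁−z₂,τ)ρ(x−z₂,τ) − ρ(z₁−z₂,τ)ρ(x−z₁,τ) for x with x−z₁, x−z₂ ∉ ℤ+τℤ. Then f extends holomorphically across x=z₁ and x=z₂, and its limits satisfy lim_{x→z₁} f(x) = lim_{x→z₂} f(x) = η(z₁−z₂,τ). -/
noncomputable section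

open Complex

/-- `π` as a complex number. -/
def piC : ℂ := Real.pi

/-- The nome `q = e^{2πiτ}`. -/
def qpar (τ : ℂ) : ℂ := Complex.exp (2 * piC * Complex.I * τ)

/-- The normalized first Jacobi theta function
`θ(x,τ) = (sin(πx)/π) ∏_{j≥1} (1-q^j e^{2πix})(1-q^j e^{-2πix})(1-q^j)^{-2}`. -/
def Theta (τ x : ℂ) : ℂ :=
  (Complex.sin (piC * x) / piC) *
    ∏' j : ℕ,
      ((1 - qpar τ ^ (j + 1) * Complex.exp (2 * piC * Complex.I * x)) *
        (1 - qpar τ ^ (j + 1) * Complex.exp (-(2 * piC * Complex.I * x))) *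
        ((1 - qpar τ ^ (j + 1))⁻¹) ^ 2)

/-- `ρ(x,τ) = θ'(x,τ)/θ(x,τ)` (derivative in `x`). -/
def rho (τ x : ℂ) : ℂ := deriv (Theta τ) x / Theta τ x

/-- `σ(x,w,τ) = θ(x+w,τ)/(θ(x,τ)θ(w,τ))`. -/
def sigmaF (τ x w : ℂ) : ℂ := Theta τ (x + w) / (Theta τ x * Theta τ w)

/-- `φ(x,w,τ) = ∂_x σ(w,−x,τ)`. -/
def phiF (τ x w : ℂ) : ℂ := deriv (fun y => sigmaF τ w (-y)) x

/-- `η(x,τ) = ρ(x,τ)² + ρ'(x,τ)`. -/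
def etaF (τ x : ℂ) : ℂ := rho τ x ^ 2 + deriv (rho τ) x

/-- Membership in the lattice `ℤ + τℤ`. -/
def InLat (τ z : ℂ) : Prop := ∃ k l : ℤ, z = (k : ℂ) + (l : ℂ) * τ

/-!
`θ` is entire with a simple zero at `0` and `θ'(0) = 1`, so near `0` we have
`ρ(y) = 1/y + g(y)` with `g` holomorphic. With `R = ρ(· - z₂)` one can rewrite
`f(x) = ρ(x - z₁) (R(x) - R(z₁)) + R(z₁) R(x)`, and the first term is the difference quotient
of `R` at `z₁` plus `g(x - z₁) (R(x) - R(z₁))`; it therefore extends with value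
`R'(z₁) = ρ'(z₁ - z₂)`, so the extension at `z₁` takes the value `η(z₁ - z₂)`. Because `ρ` is odd,
`f` is symmetric in `z₁, z₂` and `η` is even, which gives the same value at `z₂`.
Holomorphy of `θ` comes from the locally uniform convergence of the product, whose factors are
`1 + O(|q|^j)` on bounded sets.
-/

open Filter Topology

section

variable {𝕜 : Type*} [NontriviallyNormedField 𝕜]

lemma deriv_neg_of_odd {F : Type*} [NormedAddCommGroup F] [NormedSpace 𝕜 F] {f : 𝕜 → F}
    (hf : ∀ x, f (-x) = -f x) (x : 𝕜) : deriv f (-x) = deriv f x := by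
  have hf' : f = fun y => -f (-y) := funext fun y => by rw [hf, neg_neg]
  conv_rhs => rw [hf']
  rw [deriv.fun_neg, deriv_comp_neg, neg_neg]

lemma analyticAt_dslope {E : Type*} [NormedAddCommGroup E] [NormedSpace 𝕜 E] {f : 𝕜 → E}
    {a : 𝕜} (hf : AnalyticAt 𝕜 f a) : AnalyticAt 𝕜 (dslope f a) a :=
  let ⟨p, hp⟩ := hf
  ⟨p.fslope, hp.has_fpower_series_dslope_fslope⟩

lemma AnalyticAt.exists_logDeriv_eventuallyEq_inv_add [CompleteSpace 𝕜] {f : 𝕜 → 𝕜}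
    (hf : AnalyticAt 𝕜 f 0) (h0 : f 0 = 0) (h1 : deriv f 0 ≠ 0) :
    ∃ g : 𝕜 → 𝕜, AnalyticAt 𝕜 g 0 ∧ logDeriv f =ᶠ[𝓝[≠] 0] fun y => y⁻¹ + g y := by
  set h := dslope f 0 with hdef
  have hh : AnalyticAt 𝕜 h 0 := analyticAt_dslope hf
  have hh0 : h 0 ≠ 0 := by rwa [hdef, dslope_same]
  have hfh : f = fun y => y * h y :=
    funext fun y => by simpa [h0] using (sub_smul_dslope f 0 y).symm
  refine ⟨logDeriv h, hh.deriv.div hh hh0, ?_⟩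
  filter_upwards [hh.eventually_analyticAt.filter_mono nhdsWithin_le_nhds,
    (hh.continuousAt.eventually_ne hh0).filter_mono nhdsWithin_le_nhds, self_mem_nhdsWithin]
    with y hya hy0 hy
  rw [hfh, logDeriv_mul (f := fun y => y) y hy hy0 differentiableAt_id hya.differentiableAt,
    logDeriv_id', one_div]

lemma exists_analyticAt_eventuallyEq_mul_sub_self {P g R : 𝕜 → 𝕜} {z : 𝕜}
    (hg : AnalyticAt 𝕜 g z) (hP : P =ᶠ[𝓝[≠] z] fun x => (x - z)⁻¹ + g x)
    (hR : AnalyticAt 𝕜 R z) :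
    ∃ F : 𝕜 → 𝕜, AnalyticAt 𝕜 F z ∧ F =ᶠ[𝓝[≠] z] (fun x => P x * (R x - R z)) ∧
      F z = deriv R z := by
  refine ⟨fun x => dslope R z x + g x * (R x - R z),
    (analyticAt_dslope hR).add (hg.mul (hR.sub analyticAt_const)), ?_, by simp⟩
  filter_upwards [hP, self_mem_nhdsWithin] with x hPx hx
  rw [hPx, dslope_of_ne _ hx, slope_def_field]
  field_simp [sub_ne_zero.2 hx]

lemma exists_analyticAt_eventuallyEq_pole_combination {r g : 𝕜 → 𝕜} (hg : AnalyticAt 𝕜 g 0)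
    (hr : r =ᶠ[𝓝[≠] 0] fun y => y⁻¹ + g y) {z w : 𝕜} (hzw : AnalyticAt 𝕜 r (z - w)) :
    ∃ F : 𝕜 → 𝕜, AnalyticAt 𝕜 F z ∧
      F =ᶠ[𝓝[≠] z] (fun x => r (x - z) * r (x - w) + r (z - w) * r (x - w)
        - r (z - w) * r (x - z)) ∧
      F z = r (z - w) ^ 2 + deriv r (z - w) := by
  have hR : AnalyticAt 𝕜 (fun x => r (x - w)) z := hzw.comp (f := fun x => x - w) (by fun_prop)
  have hgz : AnalyticAt 𝕜 (fun x => g (x - z)) z := by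
    rw [← sub_self z] at hg
    exact hg.comp (f := fun x => x - z) (by fun_prop)
  have hP : (fun x => r (x - z)) =ᶠ[𝓝[≠] z] fun x => (x - z)⁻¹ + g (x - z) := by
    refine Tendsto.eventually ?_ hr
    have h := (map_subRight_nhdsNE (c := z) (a := z)).le
    rwa [sub_self] at h
  obtain ⟨F, hF, hFeq, hFz⟩ := exists_analyticAt_eventuallyEq_mul_sub_self hgz hP hR
  refine ⟨fun x => F x + r (z - w) * r (x - w), hF.add (analyticAt_const.mul hR), ?_, ?_⟩
  · filter_upwards [hFeq] with x hx
    rw [hx]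
    ring
  · simp only [hFz, deriv_comp_sub_const]
    ring

end

lemma piC_ne_zero : piC ≠ 0 := Complex.ofReal_ne_zero.2 Real.pi_ne_zero

lemma norm_cexp_two_piC_I_mul (x : ℂ) :
    ‖cexp (2 * piC * I * x)‖ = Real.exp (-(2 * Real.pi * x.im)) := by
  simp [Complex.norm_exp, piC, Complex.mul_re, Complex.mul_im]

lemma norm_cexp_two_piC_I_mul_le {x : ℂ} {R : ℝ} (hx : ‖x‖ ≤ R) :
    ‖cexp (2 * piC * I * x)‖ ≤ Real.exp (2 * Real.pi * R) := by
  rw [norm_cexp_two_piC_I_mul, Real.exp_le_exp]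
  have := (neg_le_abs x.im).trans ((Complex.abs_im_le_norm x).trans hx)
  nlinarith [Real.pi_pos]

lemma norm_qpar_lt_one {τ : ℂ} (hτ : 0 < τ.im) : ‖qpar τ‖ < 1 := by
  rw [qpar, norm_cexp_two_piC_I_mul, Real.exp_lt_one_iff]
  nlinarith [Real.pi_pos]

lemma one_sub_qpar_pow_ne_zero {τ : ℂ} (hτ : 0 < τ.im) (j : ℕ) : 1 - qpar τ ^ (j + 1) ≠ 0 := by
  refine sub_ne_zero.2 fun h => ?_
  have := pow_lt_one₀ (norm_nonneg _) (norm_qpar_lt_one hτ) j.succ_ne_zero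
  rw [← norm_pow, ← h, norm_one] at this
  exact this.false

lemma summable_norm_qpar_pow_succ {τ : ℂ} (hτ : 0 < τ.im) :
    Summable fun j : ℕ => ‖qpar τ‖ ^ (j + 1) :=
  (summable_nat_add_iff 1).2 (summable_geometric_of_lt_one (norm_nonneg _) (norm_qpar_lt_one hτ))

def thetaFactor (τ x : ℂ) (j : ℕ) : ℂ :=
  (1 - qpar τ ^ (j + 1) * cexp (2 * piC * I * x)) *
    (1 - qpar τ ^ (j + 1) * cexp (-(2 * piC * I * x))) *
    ((1 - qpar τ ^ (j + 1))⁻¹) ^ 2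

def thetaProd (τ x : ℂ) : ℂ := ∏' j, thetaFactor τ x j

lemma theta_eq_sin_mul_thetaProd (τ : ℂ) :
    Theta τ = fun x => Complex.sin (piC * x) / piC * thetaProd τ x := rfl

/-- Since `e^{2πix} e^{-2πix} = 1`, the quadratic terms in `q^{j+1}` cancel. -/
lemma thetaFactor_sub_one {τ : ℂ} (hτ : 0 < τ.im) (x : ℂ) (j : ℕ) :
    thetaFactor τ x j - 1 = qpar τ ^ (j + 1) *
      (2 - cexp (2 * piC * I * x) - cexp (-(2 * piC * I * x))) / (1 - qpar τ ^ (j + 1)) ^ 2 := by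
  have hc := one_sub_qpar_pow_ne_zero hτ j
  have he : cexp (2 * piC * I * x) * cexp (-(2 * piC * I * x)) = 1 := by
    rw [← Complex.exp_add, add_neg_cancel, Complex.exp_zero]
  rw [thetaFactor, inv_pow, eq_div_iff (pow_ne_zero 2 hc)]
  field_simp
  linear_combination (qpar τ ^ (j + 1)) ^ 2 * he

lemma norm_thetaFactor_sub_one_le {τ : ℂ} (hτ : 0 < τ.im) {x : ℂ} {R : ℝ} (hx : ‖x‖ ≤ R)
    (j : ℕ) :
    ‖thetaFactor τ x j - 1‖ ≤
      (2 + 2 * Real.exp (2 * Real.pi * R)) / (1 - ‖qpar τ‖) ^ 2 * ‖qpar τ‖ ^ (j + 1) := by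
  have hq := norm_qpar_lt_one hτ
  have hden : 1 - ‖qpar τ‖ ≤ ‖1 - qpar τ ^ (j + 1)‖ := by
    have : ‖qpar τ‖ ^ (j + 1) ≤ ‖qpar τ‖ := pow_le_of_le_one (norm_nonneg _) hq.le j.succ_ne_zero
    have := norm_sub_norm_le (1 : ℂ) (qpar τ ^ (j + 1))
    rw [norm_one, norm_pow] at this
    linarith
  have hnum : ‖2 - cexp (2 * piC * I * x) - cexp (-(2 * piC * I * x))‖ ≤
      2 + 2 * Real.exp (2 * Real.pi * R) := by
    have h1 := norm_cexp_two_piC_I_mul_le hx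
    have h2 := norm_cexp_two_piC_I_mul_le (x := -x) (R := R) (by rwa [norm_neg])
    rw [mul_neg] at h2
    have h3 := norm_sub_le (2 - cexp (2 * piC * I * x)) (cexp (-(2 * piC * I * x)))
    have h4 := norm_sub_le (2 : ℂ) (cexp (2 * piC * I * x))
    norm_num at h4
    linarith
  rw [thetaFactor_sub_one hτ, norm_div, norm_mul, norm_pow, norm_pow, div_mul_eq_mul_div,
    mul_comm (‖qpar τ‖ ^ (j + 1))]
  gcongr

lemma hasProdLocallyUniformlyOn_thetaFactor {τ : ℂ} (hτ : 0 < τ.im) (R : ℝ) :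
    HasProdLocallyUniformlyOn (fun j x => thetaFactor τ x j) (thetaProd τ) (Metric.ball 0 R) := by
  have h := Summable.hasProdLocallyUniformlyOn_nat_one_add
    (f := fun j x => thetaFactor τ x j - 1) (K := Metric.ball 0 R) Metric.isOpen_ball
    ((summable_norm_qpar_pow_succ hτ).mul_left _)
    (.of_forall fun j x hx => norm_thetaFactor_sub_one_le hτ (mem_ball_zero_iff.1 hx).le j)
    (fun j => by unfold thetaFactor; fun_prop)
  simp only [add_sub_cancel] at h
  exact h

lemma differentiable_thetaProd {τ : ℂ} (hτ : 0 < τ.im) : Differentiable ℂ (thetaProd τ) :=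
  fun x => ((hasProdLocallyUniformlyOn_thetaFactor hτ (‖x‖ + 1)).differentiableOn
    (.of_forall fun s => DifferentiableOn.fun_finsetProd fun j _ => by unfold thetaFactor; fun_prop)
    Metric.isOpen_ball).differentiableAt (Metric.isOpen_ball.mem_nhds (by simp))

lemma thetaProd_ne_zero {τ x : ℂ} (hτ : 0 < τ.im) (hx : ∀ j, thetaFactor τ x j ≠ 0) :
    thetaProd τ x ≠ 0 := by
  have h := tprod_one_add_ne_zero_of_summable
    (f := fun j => thetaFactor τ x j - 1) (by simpa only [add_sub_cancel] using hx)
    (((summable_norm_qpar_pow_succ hτ).mul_left _).of_nonneg_of_le (fun _ => norm_nonneg _)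
      (norm_thetaFactor_sub_one_le hτ le_rfl))
  simp only [add_sub_cancel] at h
  exact h

lemma InLat.neg {τ z : ℂ} (h : InLat τ z) : InLat τ (-z) := by
  obtain ⟨k, l, rfl⟩ := h
  exact ⟨-k, -l, by push_cast; ring⟩

lemma not_inLat_neg {τ z : ℂ} (h : ¬InLat τ z) : ¬InLat τ (-z) :=
  fun hn => h (by simpa using hn.neg)

lemma one_sub_qpar_pow_mul_cexp_ne_zero {τ x : ℂ} (hx : ¬InLat τ x) (j : ℕ) :
    1 - qpar τ ^ (j + 1) * cexp (2 * piC * I * x) ≠ 0 := by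
  refine sub_ne_zero.2 fun h => hx ?_
  have h1 : cexp (((j + 1 : ℕ) : ℂ) * (2 * piC * I * τ) + 2 * piC * I * x) = 1 := by
    rw [Complex.exp_add, Complex.exp_nat_mul, ← qpar, h.symm]
  obtain ⟨n, hn⟩ := Complex.exp_eq_one_iff.1 h1
  have h2piI : 2 * piC * I ≠ 0 := by simp [piC_ne_zero]
  refine ⟨n, -(j + 1 : ℤ), mul_left_cancel₀ h2piI ?_⟩
  push_cast at hn ⊢
  unfold piC at *
  linear_combination hn

lemma thetaFactor_ne_zero {τ x : ℂ} (hτ : 0 < τ.im) (hx : ¬InLat τ x) (j : ℕ) :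
    thetaFactor τ x j ≠ 0 := by
  have hneg := one_sub_qpar_pow_mul_cexp_ne_zero (not_inLat_neg hx) j
  rw [mul_neg] at hneg
  exact mul_ne_zero (mul_ne_zero (one_sub_qpar_pow_mul_cexp_ne_zero hx j) hneg)
    (pow_ne_zero _ (inv_ne_zero (one_sub_qpar_pow_ne_zero hτ j)))

lemma thetaFactor_neg (τ x : ℂ) (j : ℕ) : thetaFactor τ (-x) j = thetaFactor τ x j := by
  simp only [thetaFactor, mul_neg, neg_neg]
  ring

lemma thetaProd_zero {τ : ℂ} (hτ : 0 < τ.im) : thetaProd τ 0 = 1 := by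
  have h : ∀ j, thetaFactor τ 0 j = 1 := fun j =>
    sub_eq_zero.1 (by rw [thetaFactor_sub_one hτ]; norm_num)
  simp [thetaProd, h]

lemma differentiable_theta {τ : ℂ} (hτ : 0 < τ.im) : Differentiable ℂ (Theta τ) := by
  rw [theta_eq_sin_mul_thetaProd]
  exact (by fun_prop : Differentiable ℂ fun x => Complex.sin (piC * x) / piC).mul
    (differentiable_thetaProd hτ)

lemma theta_neg (τ x : ℂ) : Theta τ (-x) = -Theta τ x := by
  simp only [theta_eq_sin_mul_thetaProd, thetaProd, thetaFactor_neg, mul_neg, Complex.sin_neg,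
    neg_div, neg_mul]

lemma theta_zero (τ : ℂ) : Theta τ 0 = 0 := by
  simp [theta_eq_sin_mul_thetaProd]

lemma deriv_theta_zero {τ : ℂ} (hτ : 0 < τ.im) : deriv (Theta τ) 0 = 1 := by
  have hsin : HasDerivAt (fun x => Complex.sin (piC * x) / piC) 1 0 := by
    simpa [piC_ne_zero] using
      (((hasDerivAt_id (0 : ℂ)).const_mul piC).csin).div_const piC
  rw [theta_eq_sin_mul_thetaProd,
    (hsin.fun_mul (differentiable_thetaProd hτ 0).hasDerivAt).deriv, thetaProd_zero hτ]
  simp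

lemma theta_ne_zero {τ x : ℂ} (hτ : 0 < τ.im) (hx : ¬InLat τ x) : Theta τ x ≠ 0 := by
  refine mul_ne_zero (div_ne_zero (fun hsin => hx ?_) piC_ne_zero)
    (thetaProd_ne_zero hτ (thetaFactor_ne_zero hτ hx))
  obtain ⟨k, hk⟩ := Complex.sin_eq_zero_iff.1 hsin
  exact ⟨k, 0, mul_left_cancel₀ piC_ne_zero (by rw [hk, piC]; push_cast; ring)⟩

lemma rho_neg (τ x : ℂ) : rho τ (-x) = -rho τ x := by
  rw [rho, rho, deriv_neg_of_odd (theta_neg τ), theta_neg, div_neg]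

lemma etaF_neg (τ x : ℂ) : etaF τ (-x) = etaF τ x := by
  rw [etaF, etaF, rho_neg, deriv_neg_of_odd (rho_neg τ), neg_sq]

lemma analyticAt_rho {τ x : ℂ} (hτ : 0 < τ.im) (hx : ¬InLat τ x) : AnalyticAt ℂ (rho τ) x :=
  have hθ := (differentiable_theta hτ).analyticAt x
  hθ.deriv.div hθ (theta_ne_zero hτ hx)

lemma exists_rho_eventuallyEq_inv_add {τ : ℂ} (hτ : 0 < τ.im) :
    ∃ g : ℂ → ℂ, AnalyticAt ℂ g 0 ∧ rho τ =ᶠ[𝓝[≠] 0] fun y => y⁻¹ + g y :=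
  ((differentiable_theta hτ).analyticAt 0).exists_logDeriv_eventuallyEq_inv_add (theta_zero τ)
    (by rw [deriv_theta_zero hτ]; exact one_ne_zero)

lemma exists_analyticAt_eventuallyEq_rho_combination {τ z w : ℂ} (hτ : 0 < τ.im)
    (hzw : ¬InLat τ (z - w)) :
    ∃ F : ℂ → ℂ, AnalyticAt ℂ F z ∧
      F =ᶠ[𝓝[≠] z] (fun x => rho τ (x - z) * rho τ (x - w) + rho τ (z - w) * rho τ (x - w)
        - rho τ (z - w) * rho τ (x - z)) ∧
      F z = etaF τ (z - w) :=
  let ⟨_, hg, hρ⟩ := exists_rho_eventuallyEq_inv_add hτ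
  exists_analyticAt_eventuallyEq_pole_combination hg hρ (analyticAt_rho hτ hzw)

/-- `f(x) = ρ(x−z₁)ρ(x−z₂) + ρ(z₁−z₂)ρ(x−z₂) − ρ(z₁−z₂)ρ(x−z₁)`
extends holomorphically across `x = z₁` and `x = z₂`, with both limits equal to
`η(z₁−z₂,τ)`. -/
theorem rho_combination_extends (τ : ℂ) (hτ : 0 < τ.im) (z₁ z₂ : ℂ)
    (h : ¬ InLat τ (z₁ - z₂)) :
    let f : ℂ → ℂ := fun x =>
      rho τ (x - z₁) * rho τ (x - z₂) + rho τ (z₁ - z₂) * rho τ (x - z₂)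
        - rho τ (z₁ - z₂) * rho τ (x - z₁)
    (∃ F : ℂ → ℂ, AnalyticAt ℂ F z₁ ∧ F =ᶠ[nhdsWithin z₁ {z₁}ᶜ] f ∧
        F z₁ = etaF τ (z₁ - z₂)) ∧
    (∃ G : ℂ → ℂ, AnalyticAt ℂ G z₂ ∧ G =ᶠ[nhdsWithin z₂ {z₂}ᶜ] f ∧
        G z₂ = etaF τ (z₁ - z₂)) ∧
    Filter.Tendsto f (nhdsWithin z₁ {z₁}ᶜ) (nhds (etaF τ (z₁ - z₂))) ∧
    Filter.Tendsto f (nhdsWithin z₂ {z₂}ᶜ) (nhds (etaF τ (z₁ - z₂))) := by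
  intro f
  have h' : ¬InLat τ (z₂ - z₁) := by
    rw [← neg_sub]
    exact not_inLat_neg h
  obtain ⟨F, hF, hFf, hFz⟩ := exists_analyticAt_eventuallyEq_rho_combination hτ h
  obtain ⟨G, hG, hGf, hGz⟩ := exists_analyticAt_eventuallyEq_rho_combination hτ h'
  have hsymm : (fun x => rho τ (x - z₂) * rho τ (x - z₁) + rho τ (z₂ - z₁) * rho τ (x - z₁)
      - rho τ (z₂ - z₁) * rho τ (x - z₂)) = f := by
    funext x
    simp only [f, ← neg_sub z₁ z₂, rho_neg]
    ring
  rw [hsymm] at hGf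
  rw [← neg_sub, etaF_neg] at hGz
  exact ⟨⟨F, hF, hFf, hFz⟩, ⟨G, hG, hGf, hGz⟩,
    hFz ▸ hF.continuousAt.continuousWithinAt.tendsto.congr' hFf,
    hGz ▸ hG.continuousAt.continuousWithinAt.tendsto.congr' hGf⟩

end
end

section
/- Fix m ∈ ℤ_{>0} and A, B ∈ ℂ^×. The set T_{m,A,B} of entire functions f : ℂ → ℂ satisfying f(x+1) = A(−1)^m f(x) and f(x+τ) = B(−1)^m e^{−πimτ−2πimx} f(x) for all x ∈ ℂ is a complex vector space of dimension exactly m. -/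
noncomputable section

open Complex

/-- `f` is a theta-polynomial of degree `m` with multipliers `(A, B)`:
`f(x+1) = A(−1)^m f(x)` and `f(x+τ) = B(−1)^m e^{−πimτ−2πimx} f(x)`. -/
def IsThetaPoly (τ : ℂ) (m : ℕ) (A B : ℂ) (f : ℂ → ℂ) : Prop :=
  (∀ x : ℂ, f (x + 1) = A * (-1) ^ m * f x) ∧
  (∀ x : ℂ, f (x + τ)
      = B * (-1) ^ m *
          Complex.exp (-(piC * Complex.I * m * τ) - 2 * piC * Complex.I * m * x) * f x)

/-- The space `T_{m,A,B}` of entire theta-polynomials of degree `m` with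
multipliers `(A,B)`, as a subspace of `ℂ → ℂ`. -/
def TSpace (τ : ℂ) (m : ℕ) (A B : ℂ) : Submodule ℂ (ℂ → ℂ) where
  carrier := {f | Differentiable ℂ f ∧ IsThetaPoly τ m A B f}
  add_mem' := by
    rintro f g ⟨hf, hf1, hf2⟩ ⟨hg, hg1, hg2⟩
    refine ⟨hf.add hg, fun x => ?_, fun x => ?_⟩
    · simp only [Pi.add_apply, hf1 x, hg1 x]; ring
    · simp only [Pi.add_apply, hf2 x, hg2 x]; ring
  zero_mem' := by
    refine ⟨differentiable_const 0, fun x => ?_, fun x => ?_⟩ <;>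
      simp [Pi.zero_apply]
  smul_mem' := by
    rintro a f ⟨hf, hf1, hf2⟩
    refine ⟨hf.const_smul a, fun x => ?_, fun x => ?_⟩
    · simp only [Pi.smul_apply, smul_eq_mul, hf1 x]; ring
    · simp only [Pi.smul_apply, smul_eq_mul, hf2 x]; ring

/-!
Write `e(z) = e^{2πiz}` and choose `α` with `e(α) = A(-1)^m`. Multiplying by `e(-αx)` identifies
`T_{m,A,B}` with the space of entire `1`-periodic `g` satisfying `g(x + τ) = C e(-mx) g(x)` for an
explicit `C ≠ 0`. Moving the segment `[0, 1]` to `[τ, 1 + τ]` in the Fourier coefficients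
`c_n = ∫₀¹ e(-nt) g(t) dt` gives `c_n = C e(-nτ) c_{n+m}`, so `c_0, …, c_{m-1}` determine every
`c_n`, hence `g`. Conversely `e(rx) θ(mx + z₀, mτ)`, with `θ` the Jacobi theta function and
`z₀` tuned to `C`, has `c_s = δ_{rs}` for `0 ≤ r, s < m`.
-/

namespace ThetaSpace

open scoped Real
open Filter Topology Function

def expTwoPiI (z : ℂ) : ℂ := cexp (2 * π * I * z)

local notation "𝐞" => expTwoPiI

lemma expTwoPiI_add (z w : ℂ) : 𝐞 (z + w) = 𝐞 z * 𝐞 w := by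
  rw [expTwoPiI, expTwoPiI, expTwoPiI, mul_add, exp_add]

lemma expTwoPiI_ne_zero (z : ℂ) : 𝐞 z ≠ 0 := exp_ne_zero _

lemma expTwoPiI_neg (z : ℂ) : 𝐞 (-z) = (𝐞 z)⁻¹ := by
  rw [expTwoPiI, expTwoPiI, mul_neg, exp_neg]

lemma expTwoPiI_intCast (n : ℤ) : 𝐞 n = 1 := by
  rw [expTwoPiI, mul_comm, exp_int_mul_two_pi_mul_I]

lemma expTwoPiI_log_div (a : ℂ) (ha : a ≠ 0) : 𝐞 (log a / (2 * π * I)) = a := by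
  rw [expTwoPiI, mul_div_cancel₀ _ (by simp [Real.pi_ne_zero]), exp_log ha]

lemma differentiable_expTwoPiI_mul (c : ℂ) : Differentiable ℂ fun x => 𝐞 (c * x) := by
  unfold expTwoPiI
  fun_prop

lemma norm_expTwoPiI_intCast_mul_ofReal (k : ℤ) (t : ℝ) : ‖𝐞 (k * t)‖ = 1 := by
  rw [expTwoPiI, show 2 * π * I * (k * t) = ((2 * π * k * t : ℝ) : ℂ) * I by push_cast; ring]
  exact norm_exp_ofReal_mul_I _

lemma integral_expTwoPiI_intCast_mul (k : ℤ) :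
    ∫ t in (0 : ℝ)..1, 𝐞 (k * t) = if k = 0 then 1 else 0 := by
  split_ifs with hk
  · simp [hk, expTwoPiI]
  · have hc : 2 * π * I * k ≠ 0 := by simp [Real.pi_ne_zero, hk]
    simp_rw [expTwoPiI, ← mul_assoc, integral_exp_mul_complex hc]
    simp [mul_comm _ (k : ℂ), exp_int_mul_two_pi_mul_I]

lemma integral_tsum_mul_expTwoPiI {a : ℤ → ℂ} (ha : Summable fun n => ‖a n‖) (ν : ℤ → ℤ) :
    ∫ t in (0 : ℝ)..1, ∑' n, a n * 𝐞 (ν n * t) = ∑' n, if ν n = 0 then a n else 0 := by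
  have hnorm : ∀ n (t : ℝ), ‖a n * 𝐞 (ν n * t)‖ = ‖a n‖ := fun n t => by
    rw [norm_mul, norm_expTwoPiI_intCast_mul_ofReal, mul_one]
  have hsum := intervalIntegral.hasSum_integral_of_dominated_convergence
    (μ := MeasureTheory.volume) (a := 0) (b := 1) (F := fun n (t : ℝ) => a n * 𝐞 (ν n * t))
    (fun n _ => ‖a n‖) (fun n => Continuous.aestronglyMeasurable (by unfold expTwoPiI; fun_prop))
    (fun n => .of_forall fun t _ => (hnorm n t).le) (.of_forall fun _ _ => ha)
    intervalIntegrable_const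
    (.of_forall fun t _ => (ha.of_norm_bounded fun n => (hnorm n t).le).hasSum)
  simp only [intervalIntegral.integral_const_mul, integral_expTwoPiI_intCast_mul, mul_ite,
    mul_one, mul_zero] at hsum
  exact hsum.tsum_eq.symm

-- With a primitive `F` of `h`, the left side is `F (z + 1) - F z`, whose derivative
-- `h (z + 1) - h z` vanishes.
lemma integral_comp_add_eq_of_periodic {h : ℂ → ℂ} (hh : Differentiable ℂ h)
    (hper : Periodic h 1) (z : ℂ) : ∫ t in (0 : ℝ)..1, h (t + z) = ∫ t in (0 : ℝ)..1, h t := by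
  obtain ⟨F, hF⟩ := hh.isExactOn_univ
  have hint : ∀ w : ℂ, ∫ t in (0 : ℝ)..1, h (t + w) = F (1 + w) - F w := fun w => by
    rw [intervalIntegral.integral_eq_sub_of_hasDerivAt (f := fun t : ℝ => F (t + w))
      (fun t _ => ((hF _ trivial).comp_add_const _ w).comp_ofReal)
      ((hh.continuous.comp (by fun_prop)).intervalIntegrable _ _)]
    simp
  have hderiv : ∀ w, HasDerivAt (fun w => F (1 + w) - F w) 0 w := fun w => by
    have := ((hF _ trivial).comp_const_add 1 w).sub (hF w trivial)
    rwa [add_comm, hper, sub_self] at this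
  have hconst := is_const_of_deriv_eq_zero (fun w => (hderiv w).differentiableAt)
    (fun w => (hderiv w).deriv) z 0
  have h0 := hint 0
  simp only [add_zero] at h0
  rw [hint, hconst, add_zero, h0]

lemma eq_zero_of_forall_mem_Ioo {g : ℂ → ℂ} (hg : Differentiable ℂ g) {a b : ℝ} (hab : a < b)
    (h : ∀ t ∈ Set.Ioo a b, g t = 0) : g = 0 := by
  obtain ⟨c, hc⟩ : (Set.Ioo a b).Nonempty := Set.nonempty_Ioo.2 hab
  have hreal : Tendsto ((↑) : ℝ → ℂ) (𝓝[≠] c) (𝓝[≠] (c : ℂ)) :=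
    continuous_ofReal.continuousWithinAt.tendsto_nhdsWithin fun t ht => by simpa using ht
  have hfreq : ∃ᶠ z in 𝓝[≠] (c : ℂ), g z = 0 :=
    hreal.frequently (eventually_nhdsWithin_of_eventually_nhds
      (Filter.mem_of_superset (Ioo_mem_nhds hc.1 hc.2) h)).frequently
  exact funext fun z => (analyticOnNhd_univ_iff_differentiable.2 hg
    ).eqOn_zero_of_preconnected_of_frequently_eq_zero isPreconnected_univ (Set.mem_univ _) hfreq
    (Set.mem_univ z)

def coeff (g : ℂ → ℂ) (n : ℤ) : ℂ := ∫ t in (0 : ℝ)..1, 𝐞 (-n * t) * g t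

lemma coeff_add {f g : ℂ → ℂ} (hf : Continuous f) (hg : Continuous g) (n : ℤ) :
    coeff (f + g) n = coeff f n + coeff g n := by
  unfold coeff expTwoPiI
  simp_rw [Pi.add_apply, mul_add]
  exact intervalIntegral.integral_add (Continuous.intervalIntegrable (by fun_prop) _ _)
    (Continuous.intervalIntegrable (by fun_prop) _ _)

lemma coeff_smul (c : ℂ) (g : ℂ → ℂ) (n : ℤ) : coeff (c • g) n = c * coeff g n := by
  simp_rw [coeff, Pi.smul_apply, smul_eq_mul, mul_left_comm _ c]
  exact intervalIntegral.integral_const_mul _ _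

lemma eq_zero_of_coeff_eq_zero {g : ℂ → ℂ} (hg : Differentiable ℂ g) (hper : Periodic g 1)
    (h : ∀ n, coeff g n = 0) : g = 0 := by
  have : Fact ((0 : ℝ) < 1) := ⟨one_pos⟩
  let G : C(AddCircle (1 : ℝ), ℂ) := ⟨AddCircle.liftIco 1 0 (fun t : ℝ => g t),
    AddCircle.liftIco_continuous (by simpa using (hper 0).symm)
      (hg.continuous.comp continuous_ofReal).continuousOn⟩
  have hG : fourierCoeff G = 0 := funext fun n => by
    rw [Pi.zero_apply, ← h n, ContinuousMap.coe_mk, fourierCoeff_liftIco_eq,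
      fourierCoeffOn_eq_integral, coeff]
    simp only [fourier_coe_apply, expTwoPiI, zero_add, sub_zero, div_one, one_smul, smul_eq_mul,
      ofReal_one]
    push_cast
    ring_nf
  have hG0 : G = 0 := by
    have hs := hasSum_fourier_series_of_summable (f := G) (hG ▸ summable_zero)
    simp only [hG, Pi.zero_apply, zero_smul] at hs
    exact hs.unique hasSum_zero
  refine eq_zero_of_forall_mem_Ioo hg zero_lt_one fun t ht => ?_
  have := DFunLike.congr_fun hG0 (t : AddCircle (1 : ℝ))
  rwa [ContinuousMap.coe_mk, AddCircle.liftIco_coe_apply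
    (by simpa using Set.Ioo_subset_Ico_self ht)] at this

lemma forall_int_of_forall_lt_of_add_iff {P : ℤ → Prop} {m : ℕ} (hm : 0 < m)
    (hP : ∀ n, P (n + m) ↔ P n) (h : ∀ s < m, P s) (n : ℤ) : P n := by
  have hper : Periodic P m := fun n => propext (hP n)
  have hmod : n % m = ((n % m).toNat : ℤ) :=
    (Int.toNat_of_nonneg (Int.emod_nonneg n (by omega))).symm
  rw [← hper.sub_int_mul_eq (n / m), Int.cast_id, mul_comm, ← Int.emod_def, hmod]
  exact h _ (by have := Int.emod_lt_of_pos n (by omega : (0 : ℤ) < m); omega)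

def QSpace (τ : ℂ) (m : ℕ) (C : ℂ) : Submodule ℂ (ℂ → ℂ) where
  carrier := {g | Differentiable ℂ g ∧ Periodic g 1 ∧ ∀ x, g (x + τ) = C * 𝐞 (-(m * x)) * g x}
  add_mem' := by
    rintro f g ⟨hf, hf1, hfτ⟩ ⟨hg, hg1, hgτ⟩
    refine ⟨hf.add hg, hf1.add hg1, fun x => ?_⟩
    simp only [Pi.add_apply, hfτ x, hgτ x]
    ring
  zero_mem' := ⟨differentiable_const 0, fun x => rfl, fun x => by simp⟩
  smul_mem' := by
    rintro c g ⟨hg, hg1, hgτ⟩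
    refine ⟨hg.const_smul c, hg1.smul c, fun x => ?_⟩
    simp only [Pi.smul_apply, smul_eq_mul, hgτ x]
    ring

section QSpace

variable {τ : ℂ} {m : ℕ} {C : ℂ}

lemma coeff_eq_mul_coeff_add {g : ℂ → ℂ} (hg : g ∈ QSpace τ m C) (n : ℤ) :
    coeff g n = C * 𝐞 (-(n * τ)) * coeff g (n + m) := by
  obtain ⟨hd, hper, hτ⟩ := hg
  set h : ℂ → ℂ := fun x => 𝐞 (-n * x) * g x
  have hh : Differentiable ℂ h := (differentiable_expTwoPiI_mul _).mul hd
  have hhper : Periodic h 1 := fun x => by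
    simp only [h, hper x, mul_add, mul_one, expTwoPiI_add, ← Int.cast_neg, expTwoPiI_intCast]
  have hexp : ∀ t : ℂ,
      𝐞 (-n * (t + τ)) * 𝐞 (-(m * t)) = 𝐞 (-(n * τ)) * 𝐞 (-(n + m : ℤ) * t) := fun t => by
    rw [← expTwoPiI_add, ← expTwoPiI_add]
    push_cast
    ring_nf
  calc coeff g n = ∫ t in (0 : ℝ)..1, h (t + τ) :=
        (integral_comp_add_eq_of_periodic hh hhper τ).symm
    _ = ∫ t in (0 : ℝ)..1, C * 𝐞 (-(n * τ)) * (𝐞 (-(n + m : ℤ) * t) * g t) := by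
      congr 1
      funext t
      simp only [h, hτ]
      linear_combination (C * g t) * hexp t
    _ = C * 𝐞 (-(n * τ)) * coeff g (n + m) := intervalIntegral.integral_const_mul _ _

variable (τ m C) in
def coeffMap : QSpace τ m C →ₗ[ℂ] (Fin m → ℂ) where
  toFun g s := coeff g s
  map_add' f g := funext fun s => coeff_add f.2.1.continuous g.2.1.continuous s
  map_smul' c g := funext fun s => coeff_smul c g s

lemma coeffMap_injective (hm : 0 < m) (hC : C ≠ 0) : Injective (coeffMap τ m C) := by
  refine (injective_iff_map_eq_zero _).2 fun g hg => Subtype.ext ?_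
  have hall : ∀ n, coeff g n = 0 := by
    refine forall_int_of_forall_lt_of_add_iff hm (fun n => ?_) fun s hs => congrFun hg ⟨s, hs⟩
    rw [coeff_eq_mul_coeff_add g.2 n]
    simp [hC, expTwoPiI_ne_zero]
  exact eq_zero_of_coeff_eq_zero g.2.1 g.2.2.1 hall

end QSpace

def thetaElem (τ : ℂ) (m r : ℕ) (z₀ x : ℂ) : ℂ :=
  𝐞 (r * x) * jacobiTheta₂ (m * x + z₀) (m * τ)

section thetaElem

variable {τ : ℂ} {m : ℕ}

lemma differentiable_thetaElem (hτ : 0 < τ.im) (hm : 0 < m) (r : ℕ) (z₀ : ℂ) :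
    Differentiable ℂ (thetaElem τ m r z₀) := by
  have hmτ : 0 < (m * τ).im := by simpa using mul_pos (Nat.cast_pos.2 hm) hτ
  refine (differentiable_expTwoPiI_mul _).mul fun x => ?_
  exact (differentiableAt_jacobiTheta₂_fst _ hmτ).comp x (by fun_prop)

lemma periodic_thetaElem (r : ℕ) (z₀ : ℂ) : Periodic (thetaElem τ m r z₀) 1 := fun x => by
  have hθ : Periodic (jacobiTheta₂ · (m * τ)) (m * 1) :=
    Periodic.nat_mul (fun z => jacobiTheta₂_add_left z _) m
  rw [mul_one] at hθ
  rw [thetaElem, thetaElem, mul_add, mul_one, expTwoPiI_add, ← Int.cast_natCast r,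
    expTwoPiI_intCast, mul_one, mul_add, mul_one, add_right_comm]
  exact congrArg (𝐞 (r * x) * ·) (hθ _)

lemma thetaElem_add (r : ℕ) (z₀ x : ℂ) : thetaElem τ m r z₀ (x + τ) =
    𝐞 (r * τ - z₀ - m * τ / 2) * 𝐞 (-(m * x)) * thetaElem τ m r z₀ x := by
  have hexp : 𝐞 (r * (x + τ)) * cexp (-π * I * (m * τ + 2 * (m * x + z₀)))
      = 𝐞 (r * τ - z₀ - m * τ / 2) * 𝐞 (-(m * x)) * 𝐞 (r * x) := by
    unfold expTwoPiI
    rw [← exp_add, ← exp_add, ← exp_add]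
    ring_nf
  rw [thetaElem, thetaElem, show m * (x + τ) + z₀ = m * x + z₀ + m * τ by ring,
    jacobiTheta₂_add_left']
  linear_combination jacobiTheta₂ (m * x + z₀) (m * τ) * hexp

lemma thetaElem_mem_QSpace (hτ : 0 < τ.im) (hm : 0 < m) {r : ℕ} {z₀ C : ℂ}
    (hC : 𝐞 (r * τ - z₀ - m * τ / 2) = C) : thetaElem τ m r z₀ ∈ QSpace τ m C :=
  ⟨differentiable_thetaElem hτ hm r z₀, periodic_thetaElem r z₀, hC ▸ thetaElem_add r z₀⟩

lemma coeff_thetaElem (hτ : 0 < τ.im) {r s : ℕ} (hr : r < m) (hs : s < m) (z₀ : ℂ) :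
    coeff (thetaElem τ m r z₀) s = if r = s then 1 else 0 := by
  have hmτ : 0 < (m * τ).im := by simpa using mul_pos (Nat.cast_pos.2 (by omega)) hτ
  have hterm : ∀ (n : ℤ) (t : ℂ),
      𝐞 (-(s : ℤ) * t) * (𝐞 (r * t) * jacobiTheta₂_term n (m * t + z₀) (m * τ))
        = jacobiTheta₂_term n z₀ (m * τ) * 𝐞 ((r - s + m * n : ℤ) * t) := fun n t => by
    unfold expTwoPiI jacobiTheta₂_term
    rw [← exp_add, ← exp_add, ← exp_add]
    push_cast
    ring_nf
  have hfreq : ∀ n : ℤ, n ≠ 0 → (r - s + m * n : ℤ) ≠ 0 := fun n hn => by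
    rcases hn.lt_or_gt with h | h <;> nlinarith
  simp only [coeff, thetaElem, jacobiTheta₂, ← tsum_mul_left, hterm]
  rw [integral_tsum_mul_expTwoPiI ((summable_jacobiTheta₂_term_iff _ _).2 hmτ).norm,
    tsum_eq_single 0 fun n hn => if_neg (hfreq n hn)]
  simp [jacobiTheta₂_term, sub_eq_zero]

lemma coeffMap_surjective (hτ : 0 < τ.im) (hm : 0 < m) {C : ℂ} (hC : C ≠ 0) :
    Surjective (coeffMap τ m C) := by
  set γ := log C / (2 * π * I)
  let b : Fin m → QSpace τ m C := fun r =>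
    ⟨thetaElem τ m r (r * τ - m * τ / 2 - γ), thetaElem_mem_QSpace hτ hm (by
      rw [← expTwoPiI_log_div C hC]
      congr 1
      ring)⟩
  have hb : ∀ r, coeffMap τ m C (b r) = Pi.single r 1 := fun r => funext fun s => by
    simp only [coeffMap, LinearMap.coe_mk, AddHom.coe_mk, b, Pi.single_apply,
      coeff_thetaElem hτ r.2 s.2, Fin.val_inj, eq_comm]
  intro v
  refine ⟨∑ r, v r • b r, ?_⟩
  ext s
  simp [map_sum, hb, Pi.single_apply]

theorem finrank_QSpace (hτ : 0 < τ.im) (hm : 0 < m) {C : ℂ} (hC : C ≠ 0) :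
    Module.finrank ℂ (QSpace τ m C) = m :=
  (LinearEquiv.ofBijective _ ⟨coeffMap_injective hm hC, coeffMap_surjective hτ hm hC⟩
    ).finrank_eq.trans (Module.finrank_fin_fun ℂ)

end thetaElem

def twist (α : ℂ) : (ℂ → ℂ) ≃ₗ[ℂ] (ℂ → ℂ) :=
  LinearEquiv.piCongrRight fun x =>
    LinearEquiv.smulOfNeZero ℂ ℂ (𝐞 (α * x)) (expTwoPiI_ne_zero _)

lemma twist_apply (α : ℂ) (g : ℂ → ℂ) (x : ℂ) : twist α g x = 𝐞 (α * x) * g x := rfl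

lemma differentiable_twist_iff {α : ℂ} {g : ℂ → ℂ} :
    Differentiable ℂ (twist α g) ↔ Differentiable ℂ g := by
  refine ⟨fun h => ?_, (differentiable_expTwoPiI_mul α).mul⟩
  have hg : g = fun x => 𝐞 (-α * x) * twist α g x := funext fun x => by
    rw [twist_apply, neg_mul, expTwoPiI_neg, inv_mul_cancel_left₀ (expTwoPiI_ne_zero _)]
  rw [hg]
  exact (differentiable_expTwoPiI_mul _).mul h

section twist

variable {τ : ℂ} {m : ℕ} {A B α : ℂ}

lemma twist_add_one_iff (hα : 𝐞 α = A * (-1) ^ m) (g : ℂ → ℂ) (x : ℂ) :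
    twist α g (x + 1) = A * (-1) ^ m * twist α g x ↔ g (x + 1) = g x := by
  rw [twist_apply, twist_apply, ← hα, mul_add, mul_one, expTwoPiI_add,
    show 𝐞 α * (𝐞 (α * x) * g x) = 𝐞 (α * x) * 𝐞 α * g x by ring,
    mul_right_inj' (mul_ne_zero (expTwoPiI_ne_zero _) (expTwoPiI_ne_zero _))]

lemma twist_add_iff (g : ℂ → ℂ) (x : ℂ) :
    twist α g (x + τ) =
        B * (-1) ^ m * cexp (-(piC * I * m * τ) - 2 * piC * I * m * x) * twist α g x ↔
      g (x + τ) = B * (-1) ^ m * cexp (-(π * I * m * τ)) * 𝐞 (-(α * τ)) * 𝐞 (-(m * x)) * g x := by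
  have hexp : cexp (-(piC * I * m * τ) - 2 * piC * I * m * x)
      = cexp (-(π * I * m * τ)) * 𝐞 (-(m * x)) := by
    rw [expTwoPiI, ← exp_add, piC]
    ring_nf
  have hinv : 𝐞 (α * τ) * 𝐞 (-(α * τ)) = 1 := by
    rw [expTwoPiI_neg, mul_inv_cancel₀ (expTwoPiI_ne_zero _)]
  rw [twist_apply, twist_apply, mul_add, expTwoPiI_add, hexp,
    show B * (-1) ^ m * (cexp (-(π * I * m * τ)) * 𝐞 (-(m * x))) * (𝐞 (α * x) * g x)
      = 𝐞 (α * x) * 𝐞 (α * τ) * (B * (-1) ^ m * cexp (-(π * I * m * τ)) * 𝐞 (-(α * τ)) *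
        𝐞 (-(m * x)) * g x) by
      linear_combination
        (-(B * (-1) ^ m * cexp (-(π * I * m * τ)) * 𝐞 (-(m * x)) * 𝐞 (α * x) * g x)) * hinv,
    mul_right_inj' (mul_ne_zero (expTwoPiI_ne_zero _) (expTwoPiI_ne_zero _))]

lemma twist_mem_TSpace_iff (hα : 𝐞 α = A * (-1) ^ m) {g : ℂ → ℂ} :
    twist α g ∈ TSpace τ m A B ↔
      g ∈ QSpace τ m (B * (-1) ^ m * cexp (-(π * I * m * τ)) * 𝐞 (-(α * τ))) := by
  simp only [TSpace, QSpace, IsThetaPoly, Submodule.mem_mk, AddSubmonoid.mem_mk,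
    AddSubsemigroup.mem_mk, Set.mem_ofPred_eq, differentiable_twist_iff, twist_add_one_iff hα,
    twist_add_iff]
  rfl

lemma TSpace_eq_map_twist (hα : 𝐞 α = A * (-1) ^ m) :
    TSpace τ m A B = (QSpace τ m (B * (-1) ^ m * cexp (-(π * I * m * τ)) * 𝐞 (-(α * τ)))).map
      (twist α : (ℂ → ℂ) →ₗ[ℂ] (ℂ → ℂ)) := by
  ext f
  rw [Submodule.mem_map_equiv, ← twist_mem_TSpace_iff hα, LinearEquiv.apply_symm_apply]

end twist

end ThetaSpace

/-- `T_{m,A,B}` has complex dimension exactly `m`. -/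
theorem finrank_TSpace (τ : ℂ) (hτ : 0 < τ.im) (m : ℕ) (hm : 0 < m)
    (A B : ℂ) (hA : A ≠ 0) (hB : B ≠ 0) :
    Module.finrank ℂ (TSpace τ m A B) = m := by
  obtain ⟨α, hα⟩ : ∃ α, ThetaSpace.expTwoPiI α = A * (-1) ^ m :=
    ⟨_, ThetaSpace.expTwoPiI_log_div _ (mul_ne_zero hA (pow_ne_zero _ (neg_ne_zero.2 one_ne_zero)))⟩
  rw [ThetaSpace.TSpace_eq_map_twist hα, LinearEquiv.finrank_map_eq,
    ThetaSpace.finrank_QSpace hτ hm]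
  simp [hB, ThetaSpace.expTwoPiI_ne_zero]

end
end
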